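/- Let S = {A ∈ M_n(k) : A_{ij} ∈ p^{ν_{ij}}} with ν_{ii} = 0 and ν_{ij} + ν_{ji} ≥ 0 for all i,j. If S is contained in some maximal order Λ(m_1,…,m_n), then defining μ_{ij} = max over integer points m of C(ν) of (m_i − m_j), the set S̄ = {A : A_{ij} ∈ p^{μ_{ij}}} is an O-order containing S, and C(μ) and C(ν) have the same integer points. -/

import Mathlib

/-!
Every `μ_{ij}` is attained as `m_i - m_j` at an integer point `m` of `C(ν)`, so `μ ≤ ν`
entrywise, `μ_{ii} = 0`, and `μ_{il} ≤ μ_{ij} + μ_{jl}` (evaluate `μ_{ij}`, `μ_{jl}` at the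
point realising `μ_{il}`); these give `C(μ) = C(ν)` and `S ⊆ S̄`. The triangle inequality is
exactly what makes `S̄ = (p^{μ_{ij}})` closed under multiplication, and `S̄` is a full
finitely generated `O`-lattice, being the image of `M_n(O)` under entrywise scaling by
`π^{μ_{ij}}` and containing `π^N M_n(O)` for `N ≥ max μ_{ij}`.
-/

noncomputable section

/-- The fractional ideal `p^ν = π^ν O` inside `k`. -/
def pset (O : Type*) [CommRing O] {k : Type*} [Field k] [Algebra O k] (π : k) (ν : ℤ) :
    Set k := {x : k | ∃ c : O, x = algebraMap O k c * π ^ ν}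

/-- An `O`-order in `M_n(k)`: a subalgebra which is finitely generated as an `O`-module
and is a full lattice (every matrix has a nonzero `O`-multiple in it). -/
def IsOrder (O : Type*) [CommRing O] {k : Type*} [Field k] [Algebra O k] {n : ℕ}
    (S : Subalgebra O (Matrix (Fin n) (Fin n) k)) : Prop :=
  (Subalgebra.toSubmodule S).FG ∧
    ∀ A : Matrix (Fin n) (Fin n) k, ∃ c : O, c ≠ 0 ∧ algebraMap O k c • A ∈ S

/-- A subset of `M_n(k)` is an `O`-order if it is the underlying set of an order. -/
def IsOrderSet (O : Type*) [CommRing O] {k : Type*} [Field k] [Algebra O k] {n : ℕ}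
    (s : Set (Matrix (Fin n) (Fin n) k)) : Prop :=
  ∃ S : Subalgebra O (Matrix (Fin n) (Fin n) k),
    (S : Set (Matrix (Fin n) (Fin n) k)) = s ∧ IsOrder O S

/-- The maximal order `Λ(m₁,…,m_n) = {A : A_{ij} ∈ p^{m_i - m_j}}`. -/
def Lam (O : Type*) [CommRing O] {k : Type*} [Field k] [Algebra O k] {n : ℕ} (π : k)
    (m : Fin n → ℤ) : Set (Matrix (Fin n) (Fin n) k) :=
  {A | ∀ i j, A i j ∈ pset O π (m i - m j)}

/-- A maximal `O`-order. -/
def IsMaximalOrder (O : Type*) [CommRing O] {k : Type*} [Field k] [Algebra O k] {n : ℕ}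
    (S : Subalgebra O (Matrix (Fin n) (Fin n) k)) : Prop :=
  IsOrder O S ∧ ∀ T : Subalgebra O (Matrix (Fin n) (Fin n) k), IsOrder O T → S ≤ T → T = S

/-- `m` is an integer point of the convex polytope `C(ν)` (in the hyperplane `x₁ = 0`). -/
def IntPt {n : ℕ} [NeZero n] (ν : Matrix (Fin n) (Fin n) ℤ) (m : Fin n → ℤ) : Prop :=
  m 0 = 0 ∧ ∀ i j, -ν j i ≤ m i - m j ∧ m i - m j ≤ ν i j

/-- `ν` is reduced: `C(ν)` contains an integer point and every bounding hyperplane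
`x_i - x_j = ν_{ij}` contains an integer point of `C(ν)`. -/
def Reduced {n : ℕ} [NeZero n] (ν : Matrix (Fin n) (Fin n) ℤ) : Prop :=
  (∃ m, IntPt ν m) ∧ ∀ i j, ∃ m, IntPt ν m ∧ m i - m j = ν i j

section Reduction

variable {n : ℕ} [NeZero n]

def IsReduction (ν μ : Matrix (Fin n) (Fin n) ℤ) : Prop :=
  ∀ i j, IsGreatest {d : ℤ | ∃ m : Fin n → ℤ, IntPt ν m ∧ d = m i - m j} (μ i j)

namespace IsReduction

variable {ν μ : Matrix (Fin n) (Fin n) ℤ} (h : IsReduction ν μ)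
include h

theorem exists_intPt (i j : Fin n) : ∃ m, IntPt ν m ∧ μ i j = m i - m j :=
  (h i j).1

theorem sub_le {m : Fin n → ℤ} (hm : IntPt ν m) (i j : Fin n) : m i - m j ≤ μ i j :=
  (h i j).2 ⟨m, hm, rfl⟩

theorem le (i j : Fin n) : μ i j ≤ ν i j := by
  obtain ⟨m, hm, hμ⟩ := h.exists_intPt i j
  exact hμ ▸ (hm.2 i j).2

theorem diag (i : Fin n) : μ i i = 0 := by
  obtain ⟨m, -, hμ⟩ := h.exists_intPt i i
  rw [hμ, sub_self]

theorem triangle (i j l : Fin n) : μ i l ≤ μ i j + μ j l := by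
  obtain ⟨m, hm, hμ⟩ := h.exists_intPt i l
  linarith [h.sub_le hm i j, h.sub_le hm j l]

theorem intPt_iff (m : Fin n → ℤ) : IntPt μ m ↔ IntPt ν m := by
  constructor
  · rintro ⟨h0, hm⟩
    refine ⟨h0, fun i j => ⟨?_, ?_⟩⟩
    · linarith [(hm i j).1, h.le j i]
    · linarith [(hm i j).2, h.le i j]
  · intro hm
    refine ⟨hm.1, fun i j => ⟨?_, h.sub_le hm i j⟩⟩
    linarith [h.sub_le hm j i]

end IsReduction

end Reduction

section Lattice

variable {O k : Type*} [CommRing O] [Field k] [Algebra O k] {π : k} {ϖ : O}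

theorem mul_mem_pset (hπ0 : π ≠ 0) {a b : ℤ} {x y : k} (hx : x ∈ pset O π a)
    (hy : y ∈ pset O π b) : x * y ∈ pset O π (a + b) := by
  obtain ⟨c, rfl⟩ := hx
  obtain ⟨d, rfl⟩ := hy
  exact ⟨c * d, by rw [map_mul, zpow_add₀ hπ0]; ring⟩

theorem pset_antitone (hπ : π = algebraMap O k ϖ) (hπ0 : π ≠ 0) : Antitone (pset O π) := by
  intro a b hab x ⟨c, hx⟩
  obtain ⟨d, hd⟩ := Int.eq_ofNat_of_zero_le (sub_nonneg.2 hab)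
  refine ⟨c * ϖ ^ d, ?_⟩
  rw [hx, map_mul, map_pow, ← hπ, show b = a + d by omega, zpow_add₀ hπ0, zpow_natCast]
  ring

theorem pset_eq_span (ν : ℤ) : pset O π ν = (O ∙ π ^ ν : Submodule O k) := by
  ext x
  simp [pset, Submodule.mem_span_singleton, Algebra.smul_def, eq_comm]

variable {ι : Type*}

variable (O π) in
def entrywiseScale (μ : Matrix ι ι ℤ) : Matrix ι ι O →ₗ[O] Matrix ι ι k where
  toFun C := Matrix.of fun i j => algebraMap O k (C i j) * π ^ μ i j
  map_add' C D := by ext; simp [add_mul]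
  map_smul' c C := by ext; simp [Algebra.smul_def, mul_assoc]

variable (O π) in
def entrywiseLattice (μ : Matrix ι ι ℤ) : Submodule O (Matrix ι ι k) :=
  LinearMap.range (entrywiseScale O π μ)

variable {μ : Matrix ι ι ℤ}

theorem mem_entrywiseLattice {A : Matrix ι ι k} :
    A ∈ entrywiseLattice O π μ ↔ ∀ i j, A i j ∈ pset O π (μ i j) := by
  constructor
  · rintro ⟨C, rfl⟩ i j
    exact ⟨C i j, rfl⟩
  · intro hA
    choose C hC using hA
    exact ⟨C, by ext i j; exact (hC i j).symm⟩

theorem entrywiseLattice_fg [Finite ι] : (entrywiseLattice O π μ).FG :=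
  Submodule.fg_range _

theorem one_mem_entrywiseLattice [DecidableEq ι] (hdiag : ∀ i, μ i i = 0) :
    (1 : Matrix ι ι k) ∈ entrywiseLattice O π μ := by
  refine mem_entrywiseLattice.2 fun i j => ?_
  rcases eq_or_ne i j with rfl | hij
  · exact ⟨1, by simp [hdiag]⟩
  · exact ⟨0, by simp [hij]⟩

theorem mul_mem_entrywiseLattice [Fintype ι] (hπ : π = algebraMap O k ϖ) (hπ0 : π ≠ 0)
    (htri : ∀ i j l, μ i l ≤ μ i j + μ j l) {A B : Matrix ι ι k}
    (hA : A ∈ entrywiseLattice O π μ) (hB : B ∈ entrywiseLattice O π μ) :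
    A * B ∈ entrywiseLattice O π μ := by
  rw [mem_entrywiseLattice] at hA hB ⊢
  intro i j
  rw [Matrix.mul_apply, pset_eq_span]
  refine sum_mem fun l _ => ?_
  have h := pset_antitone hπ hπ0 (htri i l j) (mul_mem_pset hπ0 (hA i l) (hB l j))
  rwa [pset_eq_span] at h

theorem exists_smul_mem_entrywiseLattice [IsDomain O] [IsFractionRing O k] [Finite ι]
    (hπ : π = algebraMap O k ϖ) (hπ0 : π ≠ 0) (A : Matrix ι ι k) :
    ∃ c : O, c ≠ 0 ∧ algebraMap O k c • A ∈ entrywiseLattice O π μ := by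
  obtain ⟨b, hb⟩ := IsLocalization.exist_integer_multiples_of_finite (nonZeroDivisors O)
    fun p : ι × ι => A p.1 p.2
  obtain ⟨N, hN⟩ := Finite.exists_le fun p : ι × ι => (μ p.1 p.2).toNat
  have hϖ0 : ϖ ≠ 0 := by rintro rfl; simp [hπ] at hπ0
  refine ⟨ϖ ^ N * b, mul_ne_zero (pow_ne_zero N hϖ0) (nonZeroDivisors.ne_zero b.2),
    mem_entrywiseLattice.2 fun i j => ?_⟩
  obtain ⟨a, ha⟩ := hb (i, j)
  have hμN : μ i j ≤ N := (Int.self_le_toNat _).trans (by exact_mod_cast hN (i, j))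
  refine pset_antitone hπ hπ0 hμN ⟨a, ?_⟩
  rw [Algebra.smul_def] at ha
  rw [Matrix.smul_apply, smul_eq_mul, map_mul, mul_assoc, ← ha, map_pow, ← hπ, zpow_natCast]
  ring

end Lattice

theorem isOrderSet_entrywise {n : ℕ} {O k : Type*} [CommRing O] [IsDomain O] [Field k]
    [Algebra O k] [IsFractionRing O k] {π : k} {ϖ : O} {μ : Matrix (Fin n) (Fin n) ℤ}
    (hπ : π = algebraMap O k ϖ) (hπ0 : π ≠ 0) (hdiag : ∀ i, μ i i = 0)
    (htri : ∀ i j l, μ i l ≤ μ i j + μ j l) :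
    IsOrderSet O {A : Matrix (Fin n) (Fin n) k | ∀ i j, A i j ∈ pset O π (μ i j)} :=
  ⟨(entrywiseLattice O π μ).toSubalgebra (one_mem_entrywiseLattice hdiag)
      fun _ _ => mul_mem_entrywiseLattice hπ hπ0 htri,
    Set.ext fun _ => mem_entrywiseLattice,
    by simpa using entrywiseLattice_fg,
    fun A => exists_smul_mem_entrywiseLattice hπ hπ0 A⟩

theorem stmt13_general {n : ℕ} [NeZero n] {O : Type*} [CommRing O] [IsDomain O]
{k : Type*} [Field k] [Algebra O k] [IsFractionRing O k]
    (ϖ : O) (hϖ : Irreducible ϖ) (π : k) (hπ : π = algebraMap O k ϖ)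
    (ν : Matrix (Fin n) (Fin n) ℤ)
    (μ : Matrix (Fin n) (Fin n) ℤ)
    (hμ : ∀ i j : Fin n,
      IsGreatest {d : ℤ | ∃ m : Fin n → ℤ, IntPt ν m ∧ d = m i - m j} (μ i j)) :
    IsOrderSet O {A : Matrix (Fin n) (Fin n) k | ∀ i j, A i j ∈ pset O π (μ i j)} ∧
    {A : Matrix (Fin n) (Fin n) k | ∀ i j, A i j ∈ pset O π (ν i j)} ⊆
      {A : Matrix (Fin n) (Fin n) k | ∀ i j, A i j ∈ pset O π (μ i j)} ∧
    (∀ m : Fin n → ℤ, IntPt μ m ↔ IntPt ν m) := by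
  have hred : IsReduction ν μ := hμ
  have hπ0 : π ≠ 0 := hπ ▸ (map_ne_zero_iff _ (IsFractionRing.injective O k)).2 hϖ.ne_zero
  exact ⟨isOrderSet_entrywise hπ hπ0 hred.diag hred.triangle,
    fun A hA i j => pset_antitone hπ hπ0 (hred.le i j) (hA i j),
    hred.intPt_iff⟩

/-- If `S = (p^{ν_{ij}})` is contained in some maximal order `Λ(m)`, then setting
`μ_{ij}` to be the maximum of `m_i - m_j` over integer points of `C(ν)`, the set
`S̄ = (p^{μ_{ij}})` is an `O`-order containing `S`, and `C(μ)` and `C(ν)` have the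
same integer points. -/
theorem stmt13 {n : ℕ} [NeZero n] {O : Type*} [CommRing O] [IsDomain O] [IsDiscreteValuationRing O]
{k : Type*} [Field k] [Algebra O k] [IsFractionRing O k]
    (ϖ : O) (hϖ : Irreducible ϖ) (π : k) (hπ : π = algebraMap O k ϖ)
    (ν : Matrix (Fin n) (Fin n) ℤ) (hdiag : ∀ i, ν i i = 0)
    (hsym : ∀ i j, 0 ≤ ν i j + ν j i)
    (hcont : ∃ m : Fin n → ℤ,
      {A : Matrix (Fin n) (Fin n) k | ∀ i j, A i j ∈ pset O π (ν i j)} ⊆ Lam O π m)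
    (μ : Matrix (Fin n) (Fin n) ℤ)
    (hμ : ∀ i j : Fin n,
      IsGreatest {d : ℤ | ∃ m : Fin n → ℤ, IntPt ν m ∧ d = m i - m j} (μ i j)) :
    IsOrderSet O {A : Matrix (Fin n) (Fin n) k | ∀ i j, A i j ∈ pset O π (μ i j)} ∧
    {A : Matrix (Fin n) (Fin n) k | ∀ i j, A i j ∈ pset O π (ν i j)} ⊆
      {A : Matrix (Fin n) (Fin n) k | ∀ i j, A i j ∈ pset O π (μ i j)} ∧
    (∀ m : Fin n → ℤ, IntPt μ m ↔ IntPt ν m) :=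
  stmt13_general ϖ hϖ π hπ ν μ hμ
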